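/- arXiv:1703.04339 — 2 statements merged into one kernel-verified Lean document; each statement's English description precedes it below -/
import Mathlib

section
/- Let X ⊆ I^∞ be compact and nonempty, (n_j) a strictly increasing sequence in ℕ, and (P_j) compact subsets P_j ⊆ I^{n_j} with X ⊆ int_{I^∞}(P_j × I^∞_{n_j}) ⊆ P_j × I^∞_{n_j} ⊆ N(X, 2/j) for all j and p_{n_j}^{n_{j+1}}(P_{j+1}) ⊆ int_{I^{n_j}}(P_j). Fix j ∈ ℕ and a closed subset B_j of P_j; for k ≥ j set B_k = (p_{n_j}^{n_k})^{-1}(B_j) ∩ P_k, and set B_{j,∞} = p_{n_j,∞}^{-1}(B_j) ∩ X. Then for every open neighborhood S of B_{j,∞} in I^∞ there exists k ≥ j such that B_l ⊆ S for all l ≥ k. -/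
open Set Filter Topology

noncomputable section

/-- The Hilbert cube `I^∞ = ∏_{i ≥ 1} [0,1]`; the index `i : ℕ` represents coordinate `i + 1`. -/
abbrev Iinf : Type := ℕ → unitInterval

/-- The metric `ρ(x, y) = Σ_{i=1}^∞ |x_i − y_i| / 2^i` on the Hilbert cube (whose topology is
the product topology carried by `Iinf`). -/
def rho (x y : Iinf) : ℝ := ∑' i : ℕ, |((x i : ℝ)) - (y i : ℝ)| / 2 ^ (i + 1)

/-- `I^k`, identified with the subset `I^k × {0}` of `I^∞` (all coordinates beyond `k` zero). -/
def cubeFin (k : ℕ) : Set Iinf := {x | ∀ i, k ≤ i → x i = 0}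

/-- `p_{k,∞} : I^∞ → I^k`, projection to the first `k` coordinates.  For `j ≤ k` it also
serves as `p_j^k : I^k → I^j`. -/
def proj (k : ℕ) (x : Iinf) : Iinf := fun i => if i < k then x i else 0

/-- `P × I^∞_k = {x ∈ I^∞ : p_{k,∞}(x) ∈ P}`, for `P ⊆ I^k`. -/
def cyl (k : ℕ) (P : Set Iinf) : Set Iinf := {x | proj k x ∈ P}

/-- `N(A, ε)`, the open `ε`-neighborhood of `A` in `(I^∞, ρ)`. -/
def nbhd (A : Set Iinf) (ε : ℝ) : Set Iinf := {x | ∃ a ∈ A, rho x a < ε}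

/-- The interior of `P` relative to the subspace `I^m ⊆ I^∞`. -/
def relInterior (m : ℕ) (P : Set Iinf) : Set Iinf :=
  {x ∈ cubeFin m | ∃ U : Set Iinf, IsOpen U ∧ x ∈ U ∧ U ∩ cubeFin m ⊆ P}

/-!
Since `B` is closed, `U = S ∪ (p_{n_j,∞}⁻¹ B)ᶜ` is an open set containing the compact set `X`.
The metric `ρ` is continuous and vanishes only on the diagonal, so it has a positive minimum `ε`
on the compact set `Uᶜ × X` (`Uᶜ` is closed in the compact `I^∞`); that is, `N(X, ε) ⊆ U`. For
`2 / l < ε` every point of `p_{n_j,∞}⁻¹ B ∩ P_l ⊆ N(X, 2 / l)` then lies in `U`, hence in `S`.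
-/

lemma rho_term_le (x y : Iinf) (i : ℕ) :
    |((x i : ℝ)) - (y i : ℝ)| / 2 ^ (i + 1) ≤ 1 / 2 / 2 ^ i := by
  have h : |((x i : ℝ)) - (y i : ℝ)| ≤ 1 :=
    abs_sub_le_of_nonneg_of_le (x i).2.1 (x i).2.2 (y i).2.1 (y i).2.2
  calc |((x i : ℝ)) - (y i : ℝ)| / 2 ^ (i + 1) ≤ 1 / 2 ^ (i + 1) := by gcongr
    _ = 1 / 2 / 2 ^ i := by rw [pow_succ, div_div, mul_comm]

lemma summable_rho_term (x y : Iinf) :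
    Summable fun i : ℕ => |((x i : ℝ)) - (y i : ℝ)| / 2 ^ (i + 1) :=
  (summable_geometric_two' 1).of_nonneg_of_le (fun _ => by positivity) (rho_term_le x y)

lemma continuous_rho : Continuous (Function.uncurry rho) := by
  refine continuous_tsum (fun i => ?_) (summable_geometric_two' 1) fun i p => ?_
  · fun_prop
  · rw [Real.norm_of_nonneg (by positivity)]
    exact rho_term_le p.1 p.2 i

lemma rho_pos_of_ne {x y : Iinf} (hxy : x ≠ y) : 0 < rho x y := by
  obtain ⟨i, hi⟩ := Function.ne_iff.mp hxy
  have hi' : ((x i : ℝ)) ≠ y i := fun h => hi (Subtype.ext h)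
  exact (summable_rho_term x y).tsum_pos (fun _ => by positivity) i
    (div_pos (abs_pos.mpr (sub_ne_zero.mpr hi')) (by positivity))

lemma nbhd_mono (A : Set Iinf) {ε δ : ℝ} (h : ε ≤ δ) : nbhd A ε ⊆ nbhd A δ :=
  fun _ ⟨a, ha, hxa⟩ => ⟨a, ha, hxa.trans_le h⟩

lemma IsCompact.exists_nbhd_subset_open {X U : Set Iinf} (hX : IsCompact X) (hU : IsOpen U)
    (hXU : X ⊆ U) : ∃ ε > 0, nbhd X ε ⊆ U := by
  have hK : IsCompact (Uᶜ ×ˢ X) := hU.isClosed_compl.isCompact.prod hX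
  have hpos : ∀ p ∈ Uᶜ ×ˢ X, 0 < Function.uncurry rho p := fun p ⟨hpU, hpX⟩ =>
    rho_pos_of_ne fun h => hpU (h ▸ hXU hpX)
  obtain ⟨ε, hε, hεle⟩ := hK.exists_forall_le' continuous_rho.continuousOn hpos
  refine ⟨ε, hε, fun x ⟨a, haX, hxa⟩ => ?_⟩
  by_contra hxU
  exact (hεle (x, a) ⟨hxU, haX⟩).not_gt hxa

lemma continuous_proj (k : ℕ) : Continuous (proj k) :=
  continuous_pi fun i => by
    by_cases h : i < k
    · simpa [proj, h] using continuous_apply i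
    · simpa [proj, h] using continuous_const

lemma proj_eq_self_of_mem_cubeFin {k : ℕ} {x : Iinf} (hx : x ∈ cubeFin k) : proj k x = x := by
  funext i
  by_cases h : i < k
  · simp [proj, h]
  · simp [proj, h, hx i (not_lt.mp h)]

lemma subset_cyl_of_subset_cubeFin {k : ℕ} {P : Set Iinf} (hP : P ⊆ cubeFin k) : P ⊆ cyl k P :=
  fun x hx => show proj k x ∈ P by rwa [proj_eq_self_of_mem_cubeFin (hP hx)]

theorem eventually_in_neighborhood_general
    (X : Set Iinf) (hXc : IsCompact X)
    (n : ℕ → ℕ)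
    (P : ℕ → Set Iinf)
    (hPcube : ∀ j : ℕ, 1 ≤ j → P j ⊆ cubeFin (n j))
    (hnbhd : ∀ j : ℕ, 1 ≤ j → cyl (n j) (P j) ⊆ nbhd X (2 / (j : ℝ)))
    (j : ℕ) (B : Set Iinf) (hBcl : IsClosed B)
    (S : Set Iinf) (hS : IsOpen S) (hBS : proj (n j) ⁻¹' B ∩ X ⊆ S) :
    ∃ k : ℕ, j ≤ k ∧ ∀ l : ℕ, k ≤ l → proj (n j) ⁻¹' B ∩ P l ⊆ S := by
  have hU : IsOpen (S ∪ (proj (n j) ⁻¹' B)ᶜ) :=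
    hS.union (hBcl.preimage (continuous_proj _)).isOpen_compl
  have hXU : X ⊆ S ∪ (proj (n j) ⁻¹' B)ᶜ := fun x hx =>
    (em (x ∈ proj (n j) ⁻¹' B)).imp (fun hxB => hBS ⟨hxB, hx⟩) id
  obtain ⟨ε, hε, hεU⟩ := hXc.exists_nbhd_subset_open hU hXU
  obtain ⟨N, hN⟩ := exists_nat_gt (2 / ε)
  refine ⟨max j N, le_max_left _ _, fun l hl x ⟨hxB, hxP⟩ => ?_⟩
  have hNl : 2 / ε < l := hN.trans_le (by exact_mod_cast (le_max_right j N).trans hl)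
  have hl0 : (0 : ℝ) < l := (div_pos two_pos hε).trans hNl
  have hl1 : 1 ≤ l := Nat.cast_pos.mp hl0
  have h2l : 2 / (l : ℝ) ≤ ε := by
    rw [div_le_iff₀ hl0]
    linarith [(div_lt_iff₀ hε).mp hNl]
  have hxX : x ∈ nbhd X ε :=
    nbhd_mono X h2l (hnbhd l hl1 (subset_cyl_of_subset_cubeFin (hPcube l hl1) hxP))
  exact (hεU hxX).resolve_right (not_not.mpr hxB)

/-- Lemma `endset`(1).  In the setup of the polyhedral neighborhood
sequence, fix `j` and a closed `B ⊆ P_j`; for `k ≥ j` let `B_k = (p_{n_j}^{n_k})⁻¹(B) ∩ P_k`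
and `B_{j,∞} = p_{n_j,∞}⁻¹(B) ∩ X`.  Then for every open neighborhood `S` of `B_{j,∞}` in
`I^∞` there is `k ≥ j` with `B_l ⊆ S` for all `l ≥ k`. -/
theorem eventually_in_neighborhood
    (X : Set Iinf) (hXne : X.Nonempty) (hXc : IsCompact X)
    (n : ℕ → ℕ) (hn : StrictMono n)
    (P : ℕ → Set Iinf) (hPc : ∀ j : ℕ, 1 ≤ j → IsCompact (P j))
    (hPcube : ∀ j : ℕ, 1 ≤ j → P j ⊆ cubeFin (n j))
    (hint : ∀ j : ℕ, 1 ≤ j → X ⊆ interior (cyl (n j) (P j)))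
    (hnbhd : ∀ j : ℕ, 1 ≤ j → cyl (n j) (P j) ⊆ nbhd X (2 / (j : ℝ)))
    (hchain : ∀ j : ℕ, 1 ≤ j → proj (n j) '' P (j + 1) ⊆ relInterior (n j) (P j))
    (j : ℕ) (hj : 1 ≤ j) (B : Set Iinf) (hBcl : IsClosed B) (hBP : B ⊆ P j)
    (S : Set Iinf) (hS : IsOpen S) (hBS : proj (n j) ⁻¹' B ∩ X ⊆ S) :
    ∃ k : ℕ, j ≤ k ∧ ∀ l : ℕ, k ≤ l → proj (n j) ⁻¹' B ∩ P l ⊆ S :=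
  eventually_in_neighborhood_general X hXc n P hPcube hnbhd j B hBcl S hS hBS
end
end

section
/- Let X ⊆ I^∞ be compact and nonempty, (m_i) a strictly increasing sequence in ℕ, and ε_i, δ_i > 0 satisfying: (a) for all u, v ∈ I^∞ and i ∈ ℕ, ρ(u,v) < ε_{i+1} implies ρ(p_{m_i,∞}(u), p_{m_i,∞}(v)) < δ_i; (b) 5·2^{-m_i} < ε_i; (c) δ_i < 2^{1−m_i}. Let M_i ⊆ I^{m_i} be nonempty compact sets with M_i ⊆ N(X, η_i) for some η_i → 0, and let h_i : M_{i+1} → M_i be continuous with ρ(h_i(u), p_{m_i,∞}(u)) < δ_i/2 for all u ∈ M_{i+1}. Let M = lim (M_i, h_i) and let π : M → X be the map sending each thread to the limit of its associated sequence. For x ∈ X put B_{x,i} = N̄(p_{m_i,∞}(x), 2δ_i) ∩ M_i and B^#_{x,i} = N̄(p_{m_i,∞}(x), ε_i) ∩ M_i. Then for every x ∈ X: (1) B_{x,i} ⊆ B^#_{x,i} and h_i(B^#_{x,i+1}) ⊆ B_{x,i} for all i; and (2) π^{-1}(x) = lim (B_{x,i}, h_i|B_{x,i+1}) = lim (B^#_{x,i},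 h_i|B^#_{x,i+1}). -/
/-! Along a thread `(a_i)` consecutive points are `2 · 2^{-m_i}`-close, because `h_i` is
`δ_i/2`-close to the projection and `δ_i < 2^{1-m_i}`; summing, `ρ(a_i, π w) ≤ 4 · 2^{-m_i}`, so
`π w = x` puts `a_i` in `B^#_{x,i}`. Conversely `a_i ∈ B_{x,i}` gives `ρ(a_i, x) ≤ 5 · 2^{-m_i} → 0`.
Hypothesis (a), extended to `ρ(u, v) = ε_{i+1}` by sliding `v` along the segment towards `u`,
gives `h_i(B^#_{x,i+1}) ⊆ B_{x,i}`, which links the two descriptions of the fiber. -/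

open Set Filter Topology

noncomputable section

lemma abs_coord_sub_div_le (x y : Iinf) (n : ℕ) :
    |(x n : ℝ) - y n| / 2 ^ (n + 1) ≤ 1 / 2 / 2 ^ n := by
  rw [div_div, ← pow_succ']
  gcongr
  exact abs_sub_le_iff.2 ⟨by linarith [(x n).2.2, (y n).2.1], by linarith [(x n).2.1, (y n).2.2]⟩

lemma summable_rho (x y : Iinf) : Summable fun n => |(x n : ℝ) - y n| / 2 ^ (n + 1) :=
  (summable_geometric_two' 1).of_nonneg_of_le (fun _ => by positivity) (abs_coord_sub_div_le x y)

lemma abs_coord_sub_div_le_rho (x y : Iinf) (n : ℕ) :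
    |(x n : ℝ) - y n| / 2 ^ (n + 1) ≤ rho x y :=
  (summable_rho x y).le_tsum n fun _ _ => by positivity

lemma rho_nonneg (x y : Iinf) : 0 ≤ rho x y :=
  tsum_nonneg fun _ => by positivity

@[simp]
lemma rho_self (x : Iinf) : rho x x = 0 := by
  simp [rho]

lemma rho_comm (x y : Iinf) : rho x y = rho y x := by
  simp only [rho, abs_sub_comm]

lemma rho_triangle (x y z : Iinf) : rho x z ≤ rho x y + rho y z := by
  rw [rho, rho, rho, ← (summable_rho x y).tsum_add (summable_rho y z)]
  refine (summable_rho x z).tsum_le_tsum (fun n => ?_) ((summable_rho x y).add (summable_rho y z))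
  rw [← add_div]
  gcongr
  exact abs_sub_le _ _ _

lemma eq_of_rho_eq_zero {x y : Iinf} (h : rho x y = 0) : x = y := by
  funext n
  have hn := abs_coord_sub_div_le_rho x y n
  rw [h, div_le_iff₀ (by positivity), zero_mul, abs_nonpos_iff, sub_eq_zero] at hn
  exact Subtype.ext hn

lemma continuous_rho_s14 : Continuous fun p : Iinf × Iinf => rho p.1 p.2 :=
  continuous_tsum (fun n => by fun_prop) (summable_geometric_two' 1) fun n p => by
    rw [Real.norm_of_nonneg (by positivity)]
    exact abs_coord_sub_div_le p.1 p.2 n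

lemma rho_le_of_tendsto {ι : Type*} {l : Filter ι} [l.NeBot] {a : ι → Iinf} {z y : Iinf} {C : ℝ}
    (ha : Tendsto a l (𝓝 z)) (hC : ∀ᶠ j in l, rho y (a j) ≤ C) : rho y z ≤ C :=
  le_of_tendsto ((continuous_rho_s14.comp (Continuous.prodMk_right y)).continuousAt.tendsto.comp ha) hC

lemma eq_of_tendsto_of_rho_tendsto_zero {ι : Type*} {l : Filter ι} [l.NeBot] {a : ι → Iinf}
    {z x : Iinf} (ha : Tendsto a l (𝓝 z)) (hx : Tendsto (fun j => rho (a j) x) l (𝓝 0)) :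
    z = x := by
  have hz : Tendsto (fun j => rho (a j) x) l (𝓝 (rho z x)) :=
    (continuous_rho_s14.comp (Continuous.prodMk_left x)).continuousAt.tendsto.comp ha
  exact eq_of_rho_eq_zero (tendsto_nhds_unique hz hx)

lemma rho_proj_self_le (k : ℕ) (x : Iinf) : rho (proj k x) x ≤ 1 / 2 ^ k := by
  rw [rho, ← (summable_rho _ _).sum_add_tsum_nat_add k,
    Finset.sum_eq_zero fun n hn => by simp [proj, Finset.mem_range.1 hn], zero_add]
  calc ∑' n, |(proj k x (n + k) : ℝ) - x (n + k)| / 2 ^ (n + k + 1)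
      ≤ ∑' n : ℕ, 1 / 2 ^ k / 2 / 2 ^ n :=
        ((summable_nat_add_iff k).2 (summable_rho _ _)).tsum_le_tsum
          (fun n => (abs_coord_sub_div_le _ _ (n + k)).trans_eq (by ring))
          (summable_geometric_two' _)
    _ = 1 / 2 ^ k := tsum_geometric_two' _

lemma proj_proj {j k : ℕ} (hjk : j ≤ k) (x : Iinf) : proj j (proj k x) = proj j x := by
  funext n
  by_cases hn : n < j
  · simp [proj, hn, hn.trans_le hjk]
  · simp [proj, hn]

lemma rho_le_add_of_rho_proj_le {k : ℕ} {x y : Iinf} {c : ℝ} (h : rho y (proj k x) ≤ c) :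
    rho y x ≤ c + 1 / 2 ^ k :=
  (rho_triangle y (proj k x) x).trans (add_le_add h (rho_proj_self_le k x))

lemma rho_proj_le_add_of_rho_le {k : ℕ} {x y : Iinf} {c : ℝ} (h : rho y x ≤ c) :
    rho y (proj k x) ≤ c + 1 / 2 ^ k :=
  (rho_triangle y x (proj k x)).trans (add_le_add h (rho_comm x (proj k x) ▸ rho_proj_self_le k x))

lemma tendsto_div_two_pow_comp {m : ℕ → ℕ} (hm : StrictMono m) (c : ℝ) :
    Tendsto (fun i => c / 2 ^ m i) atTop (𝓝 0) :=
  tendsto_const_nhds.div_atTop ((tendsto_pow_atTop_atTop_of_one_lt one_lt_two).comp hm.tendsto_atTop)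

lemma rho_convexComb (u v : Iinf) (t : unitInterval) :
    rho u (fun n => Set.Icc.convexComb (u n) (v n) t) = t * rho u v := by
  rw [rho, rho, ← tsum_mul_left]
  congr 1
  funext n
  rw [Set.Icc.coe_convexComb, show (u n : ℝ) - ((1 - t) * u n + t * v n) = t * (u n - v n) by ring,
    abs_mul, abs_of_nonneg t.2.1, mul_div_assoc]

lemma proj_convexComb (k : ℕ) (u v : Iinf) (t : unitInterval) :
    proj k (fun n => Set.Icc.convexComb (u n) (v n) t) =
      fun n => Set.Icc.convexComb (proj k u n) (proj k v n) t := by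
  funext n
  by_cases hn : n < k <;> simp [proj, hn]

lemma rho_proj_le_of_rho_le {k : ℕ} {r s : ℝ} (hr : 0 < r)
    (hproj : ∀ u v, rho u v < r → rho (proj k u) (proj k v) < s) {u v : Iinf}
    (huv : rho u v ≤ r) : rho (proj k u) (proj k v) ≤ s := by
  refine le_of_forall_lt fun c hc => ?_
  rcases lt_or_ge c 0 with hc0 | hc0
  · exact hc0.trans_le ((rho_nonneg _ _).trans (hproj u u (by simpa using hr)).le)
  -- the projected distance `c` is attained at the point `c / d` of the way from `u` to `v`
  set d := rho (proj k u) (proj k v)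
  have hd : 0 < d := hc0.trans_lt hc
  let t : unitInterval := ⟨c / d, unitInterval.div_mem hc0 hd.le hc.le⟩
  have ht : (t : ℝ) < 1 := (div_lt_one hd).2 hc
  have hpt := hproj u (fun n => Set.Icc.convexComb (u n) (v n) t) <| by
    rw [rho_convexComb]
    exact (mul_le_mul_of_nonneg_left huv t.2.1).trans_lt (mul_lt_of_lt_one_left hr ht)
  rwa [proj_convexComb, rho_convexComb, show (t : ℝ) * d = c from div_mul_cancel₀ c hd.ne'] at hpt

section StepBounds

variable {a : ℕ → Iinf} {m : ℕ → ℕ}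

lemma rho_add_le_of_rho_succ_le (hm : StrictMono m)
    (hstep : ∀ j, rho (a j) (a (j + 1)) ≤ 2 / 2 ^ m j) (i d : ℕ) :
    rho (a i) (a (i + d)) ≤ 4 / 2 ^ m i - 4 / 2 ^ m (i + d) := by
  induction d with
  | zero => simp
  | succ d ih =>
    rw [← add_assoc]
    have hpow : (2 : ℝ) * 2 ^ m (i + d) ≤ 2 ^ m (i + d + 1) := by
      rw [← pow_succ']
      exact pow_le_pow_right₀ one_le_two (hm (i + d).lt_succ_self)
    have : 4 / 2 ^ m (i + d + 1) ≤ (2 : ℝ) / 2 ^ m (i + d) := by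
      rw [div_le_div_iff₀ (by positivity) (by positivity)]
      linarith
    have h42 : (4 : ℝ) / 2 ^ m (i + d) = 2 * (2 / 2 ^ m (i + d)) := by ring
    linarith [rho_triangle (a i) (a (i + d)) (a (i + d + 1)), hstep (i + d)]

lemma rho_le_of_tendsto_of_rho_succ_le (hm : StrictMono m)
    (hstep : ∀ j, rho (a j) (a (j + 1)) ≤ 2 / 2 ^ m j) {z : Iinf} (ha : Tendsto a atTop (𝓝 z))
    (i : ℕ) : rho (a i) z ≤ 4 / 2 ^ m i :=
  rho_le_of_tendsto ha <| eventually_atTop.2 ⟨i, fun j hj => by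
    obtain ⟨d, rfl⟩ := Nat.exists_eq_add_of_le hj
    exact (rho_add_le_of_rho_succ_le hm hstep i d).trans (sub_le_self _ (by positivity))⟩

end StepBounds

theorem fiber_description_general
    (m : ℕ → ℕ) (hm : StrictMono m)
    (ε δ : ℕ → ℝ) (hε : ∀ i, 0 < ε i) (hδ : ∀ i, 0 < δ i)
    (hproj : ∀ (u v : Iinf) (i : ℕ), rho u v < ε (i + 1) →
      rho (proj (m i) u) (proj (m i) v) < δ i)
    (hε5 : ∀ i, 5 / 2 ^ m i < ε i) (hδ2 : ∀ i, δ i < 2 / 2 ^ m i)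
    (M : ℕ → Set Iinf)
    (h : ∀ i, M (i + 1) → Iinf)
    (hhclose : ∀ i (u : M (i + 1)), rho (h i u) (proj (m i) (u : Iinf)) < δ i / 2)
    (π : {a : ∀ i, M i // ∀ i, h i (a (i + 1)) = (a i : Iinf)} → Iinf)
    (hπlim : ∀ w, Tendsto (fun i => (w.1 i : Iinf)) atTop (𝓝 (π w)))
    (x : Iinf) :
    ((∀ i, {y ∈ M i | rho y (proj (m i) x) ≤ 2 * δ i} ⊆
        {y ∈ M i | rho y (proj (m i) x) ≤ ε i}) ∧
      (∀ i (u : M (i + 1)), rho (u : Iinf) (proj (m (i + 1)) x) ≤ ε (i + 1) →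
        rho (h i u) (proj (m i) x) ≤ 2 * δ i)) ∧
    ∀ w : {a : ∀ i, M i // ∀ i, h i (a (i + 1)) = (a i : Iinf)},
      (π w = x ↔ ∀ i, rho (w.1 i : Iinf) (proj (m i) x) ≤ 2 * δ i) ∧
      (π w = x ↔ ∀ i, rho (w.1 i : Iinf) (proj (m i) x) ≤ ε i) := by
  -- lets `linarith` compare the various `c / 2 ^ m i`
  have hpow : ∀ i (c : ℝ), c / 2 ^ m i = c * (1 / 2 ^ m i) := fun i => (div_eq_mul_one_div · _)
  have hmap : ∀ i (u : M (i + 1)), rho (u : Iinf) (proj (m (i + 1)) x) ≤ ε (i + 1) →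
      rho (h i u) (proj (m i) x) ≤ 2 * δ i := fun i u hu => by
    have hpu : rho (proj (m i) u) (proj (m i) x) ≤ δ i := by
      simpa only [proj_proj (hm i.lt_succ_self).le] using
        rho_proj_le_of_rho_le (hε (i + 1)) (hproj · · i) hu
    linarith [rho_triangle (h i u) (proj (m i) u) (proj (m i) x), hhclose i u, hδ i]
  refine ⟨⟨fun i y hy => ⟨hy.1, hy.2.trans ?_⟩, hmap⟩, fun w => ?_⟩
  · linarith [hpow i 2, hpow i 5, hδ2 i, hε5 i, (by positivity : (0 : ℝ) < 1 / 2 ^ m i)]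
  have hstep : ∀ j, rho (w.1 j : Iinf) (w.1 (j + 1)) ≤ 2 / 2 ^ m j := fun j => by
    have hj := rho_le_add_of_rho_proj_le (hhclose j (w.1 (j + 1))).le
    rw [w.2 j] at hj
    linarith [hδ2 j, hpow j 2]
  have hshift : (∀ i, rho (w.1 i : Iinf) (proj (m i) x) ≤ ε i) →
      ∀ i, rho (w.1 i : Iinf) (proj (m i) x) ≤ 2 * δ i := fun hall i => by
    simpa only [w.2 i] using hmap i _ (hall (i + 1))
  have hfwd : π w = x → ∀ i, rho (w.1 i : Iinf) (proj (m i) x) ≤ ε i := fun hπ i => by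
    have hax : rho (w.1 i : Iinf) x ≤ 4 / 2 ^ m i :=
      rho_le_of_tendsto_of_rho_succ_le hm hstep (hπ ▸ hπlim w) i
    linarith [rho_proj_le_add_of_rho_le (k := m i) hax, hε5 i, hpow i 4, hpow i 5]
  have hbwd : (∀ i, rho (w.1 i : Iinf) (proj (m i) x) ≤ 2 * δ i) → π w = x := by
    intro hall
    refine eq_of_tendsto_of_rho_tendsto_zero (hπlim w) <|
      squeeze_zero (fun _ => rho_nonneg _ _) (fun i => ?_) (tendsto_div_two_pow_comp hm 5)
    linarith [rho_le_add_of_rho_proj_le (hall i), hδ2 i, hpow i 2, hpow i 5]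
  exact ⟨⟨fun hπ => hshift (hfwd hπ), hbwd⟩, hfwd, fun hall => hbwd (hshift hall)⟩

/-- fiber description, Lemma `altAJR`(3,5,6).  In the adjusted inverse
sequence setup, with `B_{x,i} = N̄(p_{m_i,∞} x, 2δ_i) ∩ M_i` and
`B^#_{x,i} = N̄(p_{m_i,∞} x, ε_i) ∩ M_i`, one has, for every `x ∈ X`:
(1) `B_{x,i} ⊆ B^#_{x,i}` and `h_i(B^#_{x,i+1}) ⊆ B_{x,i}`; and
(2) `π⁻¹(x) = lim (B_{x,i}, h_i) = lim (B^#_{x,i}, h_i)`, i.e. a thread is mapped to `x` by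
`π` iff all its coordinates lie in the `B_{x,i}`, iff they all lie in the `B^#_{x,i}`. -/
theorem fiber_description
    (X : Set Iinf) (hXne : X.Nonempty) (hXc : IsCompact X)
    (m : ℕ → ℕ) (hm : StrictMono m)
    (ε δ : ℕ → ℝ) (hε : ∀ i, 0 < ε i) (hδ : ∀ i, 0 < δ i)
    (hproj : ∀ (u v : Iinf) (i : ℕ), rho u v < ε (i + 1) →
      rho (proj (m i) u) (proj (m i) v) < δ i)
    (hε5 : ∀ i, 5 / 2 ^ m i < ε i) (hδ2 : ∀ i, δ i < 2 / 2 ^ m i)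
    (M : ℕ → Set Iinf) (hMne : ∀ i, (M i).Nonempty) (hMc : ∀ i, IsCompact (M i))
    (hMcube : ∀ i, M i ⊆ cubeFin (m i))
    (η : ℕ → ℝ) (hη : ∀ i, 0 < η i) (hη0 : Tendsto η atTop (𝓝 0))
    (hMX : ∀ i, M i ⊆ nbhd X (η i))
    (h : ∀ i, M (i + 1) → Iinf) (hhc : ∀ i, Continuous (h i))
    (hhmem : ∀ i u, h i u ∈ M i)
    (hhclose : ∀ i (u : M (i + 1)), rho (h i u) (proj (m i) (u : Iinf)) < δ i / 2)
    (π : {a : ∀ i, M i // ∀ i, h i (a (i + 1)) = (a i : Iinf)} → Iinf)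
    (hπlim : ∀ w, Tendsto (fun i => (w.1 i : Iinf)) atTop (𝓝 (π w)))
    (hπX : ∀ w, π w ∈ X)
    (x : Iinf) (hx : x ∈ X) :
    ((∀ i, {y ∈ M i | rho y (proj (m i) x) ≤ 2 * δ i} ⊆
        {y ∈ M i | rho y (proj (m i) x) ≤ ε i}) ∧
      (∀ i (u : M (i + 1)), rho (u : Iinf) (proj (m (i + 1)) x) ≤ ε (i + 1) →
        rho (h i u) (proj (m i) x) ≤ 2 * δ i)) ∧
    ∀ w : {a : ∀ i, M i // ∀ i, h i (a (i + 1)) = (a i : Iinf)},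
      (π w = x ↔ ∀ i, rho (w.1 i : Iinf) (proj (m i) x) ≤ 2 * δ i) ∧
      (π w = x ↔ ∀ i, rho (w.1 i : Iinf) (proj (m i) x) ≤ ε i) :=
  fiber_description_general m hm ε δ hε hδ hproj hε5 hδ2 M h hhclose π hπlim x
end
end
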